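/- arXiv:1312.0929 — 2 statements merged into one kernel-verified Lean document; each statement's English description precedes it below -/
import Mathlib

section
/- Let φ : [0, ∞) → [0, ∞) be differentiable with φ'(ρ) ≤ γ + β φ(ρ)^3 for positive constants γ, β. If 0 ≤ ρ ≤ 1 / (4 β^{1/3} (γ^{1/3} + β^{1/3} φ(0))^2), then γ^{1/3} + β^{1/3} φ(ρ) ≤ √2 (γ^{1/3} + β^{1/3} φ(0)), and in particular φ(ρ) ≤ (√2 − 1)(γ/β)^{1/3} + √2 φ(0). -/
/-! The substitution `ψ = γ^{1/3} + β^{1/3} φ` turns the hypothesis into the Riccati-type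
inequality `ψ' ≤ β^{1/3} ψ³`, because `γ + β φ³ ≤ (γ^{1/3} + β^{1/3} φ)³`.  Then
`(ψ⁻²)' = -2ψ'/ψ³ ≥ -2β^{1/3}`, so `ψ(ρ)⁻² ≥ ψ(0)⁻² - 2β^{1/3}ρ ≥ ψ(0)⁻²/2` as long as
`ρ ≤ 1/(4β^{1/3}ψ(0)²)`, i.e. `ψ(ρ) ≤ √2 ψ(0)`. -/

open Set

lemma Real.rpow_one_div_three_pow_three {x : ℝ} (hx : 0 ≤ x) : (x ^ ((1 : ℝ) / 3)) ^ 3 = x := by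
  simpa [one_div] using Real.rpow_inv_natCast_pow (n := 3) hx three_ne_zero

section Riccati

variable {ψ : ℝ → ℝ} {c a b : ℝ}

lemma monotoneOn_inv_sq_add_of_deriv_le_mul_pow_three
    (hdiff : ∀ t ∈ Icc a b, DifferentiableAt ℝ ψ t) (hpos : ∀ t ∈ Icc a b, 0 < ψ t)
    (hderiv : ∀ t ∈ Icc a b, deriv ψ t ≤ c * ψ t ^ 3) :
    MonotoneOn (fun t => (ψ t ^ 2)⁻¹ + 2 * c * t) (Icc a b) := by
  have hasDeriv : ∀ t ∈ Icc a b, HasDerivAt (fun t => (ψ t ^ 2)⁻¹ + 2 * c * t)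
      (-(2 * ψ t * deriv ψ t) / (ψ t ^ 2) ^ 2 + 2 * c) t := by
    intro t ht
    have hinvSq := ((hdiff t ht).hasDerivAt.pow 2).inv (pow_ne_zero 2 (hpos t ht).ne')
    refine (hinvSq.add ((hasDerivAt_id t).const_mul (2 * c))).congr_deriv ?_
    simp
  refine monotoneOn_of_hasDerivWithinAt_nonneg (convex_Icc a b)
    (fun t ht => (hasDeriv t ht).continuousAt.continuousWithinAt)
    (fun t ht => (hasDeriv t (interior_subset ht)).hasDerivWithinAt) fun t ht => ?_
  have ht := interior_subset ht
  have hψ := hpos t ht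
  have hψ4 : 2 * ψ t * deriv ψ t ≤ 2 * c * (ψ t ^ 2) ^ 2 := by
    calc 2 * ψ t * deriv ψ t ≤ 2 * ψ t * (c * ψ t ^ 3) :=
          mul_le_mul_of_nonneg_left (hderiv t ht) (by positivity)
      _ = 2 * c * (ψ t ^ 2) ^ 2 := by ring
  have : 2 * ψ t * deriv ψ t / (ψ t ^ 2) ^ 2 ≤ 2 * c := (div_le_iff₀ (by positivity)).2 hψ4
  linarith [neg_div ((ψ t ^ 2) ^ 2) (2 * ψ t * deriv ψ t)]

lemma le_sqrt_two_mul_of_deriv_le_mul_pow_three (hab : a ≤ b)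
    (hdiff : ∀ t ∈ Icc a b, DifferentiableAt ℝ ψ t) (hpos : ∀ t ∈ Icc a b, 0 < ψ t)
    (hderiv : ∀ t ∈ Icc a b, deriv ψ t ≤ c * ψ t ^ 3) (hshort : 4 * c * ψ a ^ 2 * (b - a) ≤ 1) :
    ψ b ≤ √2 * ψ a := by
  have ha := hpos a (left_mem_Icc.2 hab)
  have hb := hpos b (right_mem_Icc.2 hab)
  have hmono := monotoneOn_inv_sq_add_of_deriv_le_mul_pow_three hdiff hpos hderiv
    (left_mem_Icc.2 hab) (right_mem_Icc.2 hab) hab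
  have hinv : (2 * ψ a ^ 2)⁻¹ ≤ (ψ b ^ 2)⁻¹ := by
    have hstep : 2 * c * (b - a) ≤ (2 * ψ a ^ 2)⁻¹ := by
      rw [← one_div, le_div_iff₀ (by positivity)]
      linarith
    have hhalf : (ψ a ^ 2)⁻¹ = 2 * (2 * ψ a ^ 2)⁻¹ := by
      rw [mul_inv, ← mul_assoc, mul_inv_cancel₀ two_ne_zero, one_mul]
    simp only at hmono
    linarith
  have hsq : ψ b ^ 2 ≤ 2 * ψ a ^ 2 := (inv_le_inv₀ (by positivity) (by positivity)).1 hinv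
  calc ψ b = √(ψ b ^ 2) := (Real.sqrt_sq hb.le).symm
    _ ≤ √(2 * ψ a ^ 2) := Real.sqrt_le_sqrt hsq
    _ = √2 * ψ a := by rw [Real.sqrt_mul zero_le_two, Real.sqrt_sq ha.le]

end Riccati

/-- ODE comparison lemma: if `φ' ≤ γ + β φ³` on `[0,∞)`, then on the short time interval
`ρ ≤ 1/(4 β^{1/3} (γ^{1/3} + β^{1/3} φ(0))²)` one has
`γ^{1/3} + β^{1/3} φ(ρ) ≤ √2 (γ^{1/3} + β^{1/3} φ(0))`, hence
`φ(ρ) ≤ (√2 − 1)(γ/β)^{1/3} + √2 φ(0)`. -/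
theorem stmt0 (γ β : ℝ) (hγ : 0 < γ) (hβ : 0 < β) (φ : ℝ → ℝ)
    (hφ0 : ∀ ρ : ℝ, 0 ≤ ρ → 0 ≤ φ ρ)
    (hdiff : ∀ ρ : ℝ, 0 ≤ ρ → DifferentiableAt ℝ φ ρ)
    (hineq : ∀ ρ : ℝ, 0 ≤ ρ → deriv φ ρ ≤ γ + β * (φ ρ) ^ 3)
    (ρ : ℝ) (hρ0 : 0 ≤ ρ)
    (hρ : ρ ≤ 1 / (4 * β ^ ((1:ℝ)/3) * (γ ^ ((1:ℝ)/3) + β ^ ((1:ℝ)/3) * φ 0) ^ 2)) :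
    γ ^ ((1:ℝ)/3) + β ^ ((1:ℝ)/3) * φ ρ
        ≤ Real.sqrt 2 * (γ ^ ((1:ℝ)/3) + β ^ ((1:ℝ)/3) * φ 0) ∧
      φ ρ ≤ (Real.sqrt 2 - 1) * (γ / β) ^ ((1:ℝ)/3) + Real.sqrt 2 * φ 0 := by
  set A := γ ^ ((1 : ℝ) / 3)
  set c := β ^ ((1 : ℝ) / 3)
  have hA : 0 < A := by positivity
  have hc : 0 < c := by positivity
  have hψ : ∀ t ∈ Icc 0 ρ, 0 < A + c * φ t := fun t ht => by
    have := hφ0 t ht.1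
    positivity
  have hcube : ∀ t ∈ Icc 0 ρ, γ + β * φ t ^ 3 ≤ (A + c * φ t) ^ 3 := fun t ht => calc
    γ + β * φ t ^ 3 = A ^ 3 + (c * φ t) ^ 3 := by
      rw [mul_pow, Real.rpow_one_div_three_pow_three hγ.le, Real.rpow_one_div_three_pow_three hβ.le]
    _ ≤ (A + c * φ t) ^ 3 := pow_add_pow_le hA.le (mul_nonneg hc.le (hφ0 t ht.1)) three_ne_zero
  have hderiv : ∀ t ∈ Icc 0 ρ, deriv (fun t => A + c * φ t) t ≤ c * (A + c * φ t) ^ 3 :=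
    fun t ht => by
      rw [deriv_const_add, deriv_const_mul _ (hdiff t ht.1)]
      exact mul_le_mul_of_nonneg_left ((hineq t ht.1).trans (hcube t ht)) hc.le
  have hshort : 4 * c * (A + c * φ 0) ^ 2 * (ρ - 0) ≤ 1 := by
    have hψ0 := hψ 0 (left_mem_Icc.2 hρ0)
    rw [sub_zero, mul_comm]
    exact (le_div_iff₀ (by positivity)).1 hρ
  have hbound := le_sqrt_two_mul_of_deriv_le_mul_pow_three hρ0
    (fun t ht => ((hdiff t ht.1).const_mul c).const_add A) hψ hderiv hshort
  refine ⟨hbound, ?_⟩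
  have hsplit : (√2 - 1) * (A / c) + √2 * φ 0 = ((√2 - 1) * A + √2 * (c * φ 0)) / c := by
    field_simp
  rw [Real.div_rpow hγ.le hβ.le, hsplit, le_div_iff₀ hc]
  linarith
end

section
/- Let φ : [0, ∞) → [0, ∞) be differentiable with φ'(ρ) ≤ γ + β φ(ρ)^{3/2} for positive constants γ, β. If 0 ≤ ρ < 1 / (β ((γ/β)^{2/3} + φ(0))^{1/2}), then ((γ/β)^{2/3} + φ(ρ))^{1/2} ≤ 2 ((γ/β)^{2/3} + φ(0))^{1/2}, and hence φ(ρ) ≤ 3 (γ/β)^{2/3} + 4 φ(0). -/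
/-!
Put `a = (γ/β)^{2/3}` and `u = a + φ`. Since `a^{3/2} = γ/β` and `x^{3/2} + y^{3/2} ≤ (x + y)^{3/2}`,
the hypothesis gives `u' ≤ β u^{3/2}`, i.e. `(u^{-1/2})' ≥ -β/2`. Hence
`u(ρ)^{-1/2} ≥ u(0)^{-1/2} - βρ/2 > u(0)^{-1/2} / 2` as long as `βρ u(0)^{1/2} < 1`.
-/

open Real Set

lemma add_mul_rpow_three_halves_le {γ β y : ℝ} (hγ : 0 ≤ γ) (hβ : 0 < β) (hy : 0 ≤ y) :
    γ + β * y ^ ((3:ℝ)/2) ≤ β * ((γ / β) ^ ((2:ℝ)/3) + y) ^ ((3:ℝ)/2) := by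
  have hc : ((γ / β) ^ ((2:ℝ)/3)) ^ ((3:ℝ)/2) = γ / β := by
    rw [← rpow_mul (by positivity)]; norm_num
  calc γ + β * y ^ ((3:ℝ)/2)
      = β * (((γ / β) ^ ((2:ℝ)/3)) ^ ((3:ℝ)/2) + y ^ ((3:ℝ)/2)) := by
        rw [hc, mul_add, mul_div_cancel₀ _ hβ.ne']
    _ ≤ β * ((γ / β) ^ ((2:ℝ)/3) + y) ^ ((3:ℝ)/2) :=
        mul_le_mul_of_nonneg_left (add_rpow_le_rpow_add (by positivity) hy (by norm_num)) hβ.le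

lemma neg_half_le_deriv_rpow_neg_half {u : ℝ → ℝ} {β x : ℝ} (hux : 0 < u x)
    (hdiff : DifferentiableAt ℝ u x) (hbound : deriv u x ≤ β * u x ^ ((3:ℝ)/2)) :
    -(β / 2) ≤ deriv (fun y => u y ^ (-(1/2) : ℝ)) x := by
  have hpow : u x ^ (-(1/2) - 1 : ℝ) = (u x ^ ((3:ℝ)/2))⁻¹ := by
    rw [← rpow_neg hux.le]; norm_num
  have hpos : 0 < u x ^ ((3:ℝ)/2) := rpow_pos_of_pos hux _
  rw [deriv_rpow_const hdiff (Or.inl hux.ne'), hpow]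
  have : deriv u x * (u x ^ ((3:ℝ)/2))⁻¹ ≤ β := by
    rwa [← div_eq_mul_inv, div_le_iff₀ hpos]
  linarith

theorem rpow_neg_half_le_add_of_deriv_le {u : ℝ → ℝ} {β s t : ℝ} (hst : s ≤ t)
    (hu : ∀ x ∈ Icc s t, 0 < u x) (hdiff : ∀ x ∈ Icc s t, DifferentiableAt ℝ u x)
    (hbound : ∀ x ∈ Icc s t, deriv u x ≤ β * u x ^ ((3:ℝ)/2)) :
    u s ^ (-(1/2) : ℝ) ≤ u t ^ (-(1/2) : ℝ) + β / 2 * (t - s) := by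
  have hdiff' : ∀ x ∈ Icc s t, DifferentiableAt ℝ (fun y => u y ^ (-(1/2) : ℝ)) x :=
    fun x hx => (hdiff x hx).rpow_const (Or.inl (hu x hx).ne')
  have := (convex_Icc s t).mul_sub_le_image_sub_of_le_deriv
    (fun x hx => (hdiff' x hx).continuousAt.continuousWithinAt)
    (fun x hx => (hdiff' x (interior_subset hx)).differentiableWithinAt)
    (fun x hx => neg_half_le_deriv_rpow_neg_half (hu x (interior_subset hx))
      (hdiff x (interior_subset hx)) (hbound x (interior_subset hx)))
    s (left_mem_Icc.2 hst) t (right_mem_Icc.2 hst) hst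
  linarith

/-- ODE comparison lemma: if `φ' ≤ γ + β φ^{3/2}` on `[0,∞)`, then for
`ρ < 1/(β ((γ/β)^{2/3} + φ(0))^{1/2})` one has
`((γ/β)^{2/3} + φ(ρ))^{1/2} ≤ 2 ((γ/β)^{2/3} + φ(0))^{1/2}`, hence
`φ(ρ) ≤ 3 (γ/β)^{2/3} + 4 φ(0)`. -/
theorem stmt1 (γ β : ℝ) (hγ : 0 < γ) (hβ : 0 < β) (φ : ℝ → ℝ)
    (hφ0 : ∀ ρ : ℝ, 0 ≤ ρ → 0 ≤ φ ρ)
    (hdiff : ∀ ρ : ℝ, 0 ≤ ρ → DifferentiableAt ℝ φ ρ)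
    (hineq : ∀ ρ : ℝ, 0 ≤ ρ → deriv φ ρ ≤ γ + β * (φ ρ) ^ ((3:ℝ)/2))
    (ρ : ℝ) (hρ0 : 0 ≤ ρ)
    (hρ : ρ < 1 / (β * Real.sqrt ((γ / β) ^ ((2:ℝ)/3) + φ 0))) :
    Real.sqrt ((γ / β) ^ ((2:ℝ)/3) + φ ρ)
        ≤ 2 * Real.sqrt ((γ / β) ^ ((2:ℝ)/3) + φ 0) ∧
      φ ρ ≤ 3 * (γ / β) ^ ((2:ℝ)/3) + 4 * φ 0 := by
  set a := (γ / β) ^ ((2:ℝ)/3)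
  have hu : ∀ x ∈ Icc 0 ρ, 0 < a + φ x := fun x hx => by positivity [hφ0 x hx.1]
  have hcomp := rpow_neg_half_le_add_of_deriv_le hρ0 hu
    (fun x hx => (hdiff x hx.1).const_add a)
    (fun x hx => by
      simpa only [deriv_const_add] using
        (hineq x hx.1).trans (add_mul_rpow_three_halves_le hγ.le hβ (hφ0 x hx.1)))
  have hu0 := hu 0 (left_mem_Icc.2 hρ0)
  have huρ := hu ρ (right_mem_Icc.2 hρ0)
  rw [rpow_neg hu0.le, rpow_neg huρ.le,
    ← sqrt_eq_rpow, ← sqrt_eq_rpow, sub_zero] at hcomp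
  have hA : 0 < √(a + φ 0) := sqrt_pos.2 hu0
  have hR : 0 < √(a + φ ρ) := sqrt_pos.2 huρ
  have hβρ : β * ρ < (√(a + φ 0))⁻¹ := by
    rw [lt_div_iff₀ (by positivity)] at hρ
    rw [← one_div, lt_div_iff₀ hA]
    linarith
  have hsqrt : √(a + φ ρ) ≤ 2 * √(a + φ 0) := by
    refine ((inv_lt_inv₀ (by positivity) hR).1 ?_).le
    rw [mul_inv]
    linarith
  refine ⟨hsqrt, ?_⟩
  have hsq := pow_le_pow_left₀ hR.le hsqrt 2
  rw [mul_pow, sq_sqrt huρ.le, sq_sqrt hu0.le] at hsq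
  linarith
end
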